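/- arXiv:2404.17705 — 2 statements merged into one kernel-verified Lean document; each statement's English description precedes it below -/
import Mathlib

section
/- Let r ∈ ℕ with r ≥ 2 and p ∈ (0,1). Let N₁ be negative binomial with parameters r+1 and p, and N₂ be negative binomial with parameters r−1 and 1−p, independent, and let ĝ = (r/(N₁−1))·(N₂/(r−1)) and g = p/(1−p). Then the variance of ĝ satisfies Var[ĝ]/g² ≤ (1/(r−1))·(1 − p(1−p)/(r−1+2p)), where Var[ĝ] = E[ĝ²] − (E[ĝ])² and all expectations are the corresponding (double) series over n₁ ≥ r+1 and n₂ ≥ r−1 weighted by the negative binomial probabilities. -/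
open scoped BigOperators

/-- Expectation of `f(N)` where `N` is negative binomial with parameters `s` and `q`:
`E[f(N)] = Σ_{n ≥ s} f(n) C(n−1, s−1) q^s (1−q)^{n−s}`, written with `n = s + k`. -/
noncomputable def negbinExp (s : ℕ) (q : ℝ) (f : ℕ → ℝ) : ℝ :=
  ∑' k : ℕ, ((s + k - 1).choose (s - 1) : ℝ) * q ^ s * (1 - q) ^ k * f (s + k)

/-- Expectation of `f(N₁, N₂)` for independent negative binomials with parameters
`(s₁, q₁)` and `(s₂, q₂)`. -/
noncomputable def negbinExp2 (s₁ : ℕ) (q₁ : ℝ) (s₂ : ℕ) (q₂ : ℝ) (f : ℕ → ℕ → ℝ) : ℝ :=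
  ∑' k₁ : ℕ, ∑' k₂ : ℕ,
    ((s₁ + k₁ - 1).choose (s₁ - 1) : ℝ) * q₁ ^ s₁ * (1 - q₁) ^ k₁ *
      (((s₂ + k₂ - 1).choose (s₂ - 1) : ℝ) * q₂ ^ s₂ * (1 - q₂) ^ k₂) *
      f (s₁ + k₁) (s₂ + k₂)

/-- The m-th harmonic number `H_m = Σ_{k=1}^m 1/k`, `H_0 = 0`. -/
noncomputable def H (m : ℕ) : ℝ := ∑ k ∈ Finset.range m, (1 : ℝ) / (k + 1)

/-- The odds estimator `ĝ = (r/(N₁−1))·(N₂/(r−1))`. -/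
noncomputable def ghat (r : ℕ) (n₁ n₂ : ℕ) : ℝ :=
  ((r : ℝ) / ((n₁ : ℝ) - 1)) * ((n₂ : ℝ) / ((r : ℝ) - 1))

/-!
Since `E[r/(N₁-1)] = p` and `E[N₂] = (r-1)/(1-p)`, the estimator is unbiased; the second moment of
`N₂` is explicit, and size biasing turns `E[(r/(N₁-1))²]` into `r p D` with `D = E[1/N]`,
`N ~ NB(r, p)`. The relative variance is therefore `r (r-1+p) D / ((r-1) p) - 1`, and the claim
reduces to the quadratic bound `r D² + (r-1) D ≤ p`. That bound combines Stein's identity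
`E[(N-r)/N] = (1-p) E[N/(N+1)]` with the Cauchy–Schwarz inequality
`E[1/N]² ≤ E[1/(N(N+1))] E[(N+1)/N]`.
-/

lemma summable_mul_of_abs_le {w g : ℕ → ℝ} (hw : Summable w) (hw0 : ∀ k, 0 ≤ w k) {C : ℝ}
    (hg : ∀ k, |g k| ≤ C) : Summable (fun k => w k * g k) :=
  (hw.mul_right C).of_norm_bounded fun k => by
    rw [norm_mul, Real.norm_of_nonneg (hw0 k), Real.norm_eq_abs]
    exact mul_le_mul_of_nonneg_left (hg k) (hw0 k)

noncomputable def negbinWeight (s : ℕ) (q : ℝ) (k : ℕ) : ℝ :=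
  ((s + k - 1).choose (s - 1) : ℝ) * q ^ s * (1 - q) ^ k

section NegativeBinomial

variable {s : ℕ} {q : ℝ}

lemma negbinExp_eq_tsum (s : ℕ) (q : ℝ) (f : ℕ → ℝ) :
    negbinExp s q f = ∑' k, negbinWeight s q k * f (s + k) := rfl

lemma negbinWeight_add_one (m : ℕ) (q : ℝ) (k : ℕ) :
    negbinWeight (m + 1) q k = ((m + k).choose m : ℝ) * q ^ (m + 1) * (1 - q) ^ k := by
  simp only [negbinWeight, Nat.add_sub_cancel, Nat.add_right_comm m 1 k]

lemma negbinWeight_nonneg (hq0 : 0 ≤ q) (hq1 : q ≤ 1) (k : ℕ) : 0 ≤ negbinWeight s q k := by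
  have : 0 ≤ 1 - q := sub_nonneg.2 hq1
  unfold negbinWeight
  positivity

lemma hasSum_negbinWeight (hs : 1 ≤ s) (hq : |1 - q| < 1) : HasSum (negbinWeight s q) 1 := by
  obtain ⟨m, rfl⟩ : ∃ m, s = m + 1 := ⟨s - 1, by omega⟩
  have hq0 : q ≠ 0 := by rintro rfl; norm_num at hq
  have h := (hasSum_choose_mul_geometric_of_norm_lt_one (𝕜 := ℝ) m hq).mul_left (q ^ (m + 1))
  rw [sub_sub_cancel, mul_one_div_cancel (pow_ne_zero _ hq0)] at h
  refine h.congr_fun fun k => ?_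
  rw [negbinWeight_add_one, add_comm m k]
  ring

lemma negbinWeight_size_bias (hs : 1 ≤ s) (q : ℝ) (k : ℕ) :
    q * ((s : ℝ) + k) * negbinWeight s q k = s * negbinWeight (s + 1) q k := by
  obtain ⟨m, rfl⟩ : ∃ m, s = m + 1 := ⟨s - 1, by omega⟩
  have h : ((m + k + 1 : ℕ) : ℝ) * (m + k).choose m = (m + 1 + k).choose (m + 1) * (m + 1 : ℕ) := by
    rw [Nat.add_right_comm m 1 k]; exact_mod_cast Nat.add_one_mul_choose_eq (m + k) m
  rw [negbinWeight_add_one, negbinWeight_add_one]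
  push_cast at h ⊢
  linear_combination q ^ (m + 1) * (1 - q) ^ k * q * h

lemma negbinWeight_succ (hs : 1 ≤ s) (q : ℝ) (k : ℕ) :
    ((k : ℝ) + 1) * negbinWeight s q (k + 1) = (1 - q) * ((s : ℝ) + k) * negbinWeight s q k := by
  obtain ⟨m, rfl⟩ : ∃ m, s = m + 1 := ⟨s - 1, by omega⟩
  have h : ((m + k).choose m : ℝ) * (m + k + 1 : ℕ) = (m + k + 1).choose m * (k + 1 : ℕ) := by
    rw [← Nat.cast_mul, ← Nat.cast_mul, Nat.choose_mul_succ_eq, show m + k + 1 - m = k + 1 by omega]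
  rw [negbinWeight_add_one, negbinWeight_add_one, ← add_assoc]
  push_cast at h ⊢
  linear_combination -(q ^ (m + 1) * (1 - q) ^ k * (1 - q)) * h

lemma hasSum_negbinWeight_size_bias (hs : 1 ≤ s) (hq : |1 - q| < 1) :
    HasSum (fun k => negbinWeight s q k * ((s : ℝ) + k)) (s / q) := by
  have hq0 : q ≠ 0 := by rintro rfl; norm_num at hq
  have h := (hasSum_negbinWeight (s := s + 1) (by omega) hq).mul_left ((s : ℝ) / q)
  rw [mul_one] at h
  refine h.congr_fun fun k => ?_
  rw [div_mul_eq_mul_div, ← negbinWeight_size_bias hs, eq_div_iff hq0]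
  ring

lemma hasSum_negbinWeight_size_bias_sq (hs : 1 ≤ s) (hq : |1 - q| < 1) :
    HasSum (fun k => negbinWeight s q k * ((s : ℝ) + k) ^ 2) (s * (s + 1 - q) / q ^ 2) := by
  have hq0 : q ≠ 0 := by rintro rfl; norm_num at hq
  have h := ((hasSum_negbinWeight_size_bias (s := s + 1) (by omega) hq).sub
    (hasSum_negbinWeight (s := s + 1) (by omega) hq)).mul_left ((s : ℝ) / q)
  rw [show (s : ℝ) * (s + 1 - q) / q ^ 2 = s / q * ((s + 1 : ℕ) / q - 1) by
    push_cast; field_simp]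
  refine h.congr_fun fun k => ?_
  have hk := negbinWeight_size_bias hs q k
  push_cast
  field_simp
  linear_combination ((s : ℝ) + k) * hk

lemma negbinExp_const_mul (s : ℕ) (q c : ℝ) (f : ℕ → ℝ) :
    negbinExp s q (fun n => c * f n) = c * negbinExp s q f := by
  simp only [negbinExp_eq_tsum, ← tsum_mul_left, mul_left_comm c]

lemma negbinExp_nonneg (hq0 : 0 ≤ q) (hq1 : q ≤ 1) {f : ℕ → ℝ} (hf : ∀ n, 0 ≤ f n) :
    0 ≤ negbinExp s q f :=
  tsum_nonneg fun k => mul_nonneg (negbinWeight_nonneg hq0 hq1 k) (hf _)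

lemma negbinExp_one (hs : 1 ≤ s) (hq : |1 - q| < 1) : negbinExp s q (fun _ => 1) = 1 := by
  simpa [negbinExp_eq_tsum] using (hasSum_negbinWeight hs hq).tsum_eq

lemma negbinExp_natCast (hs : 1 ≤ s) (hq : |1 - q| < 1) :
    negbinExp s q (fun n => (n : ℝ)) = s / q := by
  simpa [negbinExp_eq_tsum] using (hasSum_negbinWeight_size_bias hs hq).tsum_eq

lemma negbinExp_natCast_sq (hs : 1 ≤ s) (hq : |1 - q| < 1) :
    negbinExp s q (fun n => (n : ℝ) ^ 2) = s * (s + 1 - q) / q ^ 2 := by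
  simpa [negbinExp_eq_tsum] using (hasSum_negbinWeight_size_bias_sq hs hq).tsum_eq

lemma negbinExp_natCast_div (hs : 1 ≤ s) (hq : |1 - q| < 1) (c : ℝ) :
    negbinExp s q (fun n => (n : ℝ) / c) = s / (q * c) := by
  simp only [div_eq_inv_mul _ c, negbinExp_const_mul, negbinExp_natCast hs hq]
  field_simp

lemma negbinExp_natCast_div_sq (hs : 1 ≤ s) (hq : |1 - q| < 1) (c : ℝ) :
    negbinExp s q (fun n => ((n : ℝ) / c) ^ 2) = s * (s + 1 - q) / (q * c) ^ 2 := by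
  simp only [div_pow, div_eq_inv_mul _ (c ^ 2), negbinExp_const_mul, negbinExp_natCast_sq hs hq]
  field_simp

lemma negbinExp_succ_div_mul (hs : 1 ≤ s) (q : ℝ) (f : ℝ → ℝ) :
    negbinExp (s + 1) q (fun n => s / ((n : ℝ) - 1) * f ((n : ℝ) - 1)) =
      q * negbinExp s q (fun n => f n) := by
  simp only [negbinExp_eq_tsum, ← tsum_mul_left]
  refine tsum_congr fun k => ?_
  have hsk : (s : ℝ) + k ≠ 0 := by positivity
  have hk := negbinWeight_size_bias hs q k
  push_cast
  rw [show (s : ℝ) + 1 + k - 1 = s + k by ring]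
  field_simp
  linear_combination -f (s + k) * hk

lemma negbinExp_div_sub_one (hs : 1 ≤ s) (hq : |1 - q| < 1) :
    negbinExp (s + 1) q (fun n => s / ((n : ℝ) - 1)) = q := by
  simpa [negbinExp_one hs hq] using negbinExp_succ_div_mul hs q (fun _ => 1)

lemma negbinExp_div_sub_one_sq (hs : 1 ≤ s) (q : ℝ) :
    negbinExp (s + 1) q (fun n => (s / ((n : ℝ) - 1)) ^ 2) =
      q * s * negbinExp s q (fun n => (n : ℝ)⁻¹) := by
  simpa only [sq, div_eq_mul_inv, negbinExp_const_mul, mul_assoc] using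
    negbinExp_succ_div_mul hs q (fun x => s * x⁻¹)

lemma negbinExp2_mul (s₁ : ℕ) (q₁ : ℝ) (s₂ : ℕ) (q₂ : ℝ) (f g : ℕ → ℝ) :
    negbinExp2 s₁ q₁ s₂ q₂ (fun n₁ n₂ => f n₁ * g n₂) = negbinExp s₁ q₁ f * negbinExp s₂ q₂ g := by
  rw [negbinExp_eq_tsum, negbinExp_eq_tsum, ← tsum_mul_right]
  refine tsum_congr fun k₁ => ?_
  rw [← tsum_mul_left]
  exact tsum_congr fun k₂ => by unfold negbinWeight; ring

/-- Stein's identity `E[(N - s) h(N)] = (1 - q) E[N h(N + 1)]`, indexed by `k = N - s`. -/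
lemma hasSum_natCast_mul_negbinWeight (hs : 1 ≤ s) {h : ℕ → ℝ} {a : ℝ}
    (ha : HasSum (fun k => (1 - q) * ((s : ℝ) + k) * negbinWeight s q k * h (k + 1)) a) :
    HasSum (fun k : ℕ => (k : ℝ) * negbinWeight s q k * h k) a := by
  rw [← hasSum_nat_add_iff' 1]
  simpa [negbinWeight_succ hs] using ha

lemma negbinExp_inv_sq_add_le (hs : 1 ≤ s) (hq0 : 0 < q) (hq1 : q < 1) :
    s * negbinExp s q (fun n => (n : ℝ)⁻¹) ^ 2 + (s - 1) * negbinExp s q (fun n => (n : ℝ)⁻¹) ≤ q := by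
  set D := negbinExp s q (fun n => (n : ℝ)⁻¹)
  have hq : |1 - q| < 1 := by rw [abs_lt]; constructor <;> linarith
  have hw := hasSum_negbinWeight hs hq
  have hw0 := negbinWeight_nonneg (s := s) hq0.le hq1.le
  have hsk : ∀ k : ℕ, 1 ≤ (s : ℝ) + k := fun k => by
    have : (1 : ℝ) ≤ s := by exact_mod_cast hs
    have : (0 : ℝ) ≤ k := k.cast_nonneg
    linarith
  have inv_le (k : ℕ) (c : ℝ) (hc : 0 ≤ c) : |((s : ℝ) + k + c)⁻¹| ≤ 1 := by
    rw [abs_inv, abs_of_pos (by linarith [hsk k])]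
    exact inv_le_one_of_one_le₀ (by linarith [hsk k])
  have hD : HasSum (fun k => negbinWeight s q k * ((s : ℝ) + k)⁻¹) D := by
    have := (summable_mul_of_abs_le (g := fun k : ℕ => ((s : ℝ) + k)⁻¹) hw.summable hw0
      fun k => by simpa using inv_le k 0 le_rfl).hasSum
    simpa [D, negbinExp_eq_tsum] using this
  set E := ∑' k, negbinWeight s q k * ((s : ℝ) + k + 1)⁻¹
  have hE : HasSum (fun k => negbinWeight s q k * ((s : ℝ) + k + 1)⁻¹) E :=
    (summable_mul_of_abs_le hw.summable hw0 fun k => inv_le k 1 zero_le_one).hasSum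
  -- Stein's identity with `h(N) = 1 / N`
  have stein : 1 - s * D = (1 - q) * (1 - E) := by
    have h := hasSum_natCast_mul_negbinWeight hs (q := q) (h := fun k => ((s : ℝ) + k)⁻¹)
      (((hw.sub hE).mul_left (1 - q)).congr_fun fun k => by
        have := hsk k; push_cast; field_simp; ring)
    refine (hw.sub (hD.mul_left (s : ℝ))).unique (h.congr_fun fun k => ?_)
    have := hsk k; field_simp; ring
  -- Cauchy–Schwarz `E[1/N]^2 ≤ E[1/(N(N+1))] E[(N+1)/N]`, as the expectation of a square
  have hsq : HasSum (fun k => negbinWeight s q k * (1 + D - D * ((s : ℝ) + k + 1)) ^ 2 /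
      (((s : ℝ) + k) * ((s : ℝ) + k + 1)))
      ((1 + D) ^ 2 * (D - E) - 2 * (1 + D) * D * D + D ^ 2 * (1 + D)) :=
    ((((hD.sub hE).mul_left ((1 + D) ^ 2)).sub (hD.mul_left (2 * (1 + D) * D))).add
      ((hw.add hD).mul_left (D ^ 2))).congr_fun fun k => by have := hsk k; field_simp; ring
  have cs := hsq.nonneg fun k => by have := hsk k; have := hw0 k; positivity
  have hD0 : 0 ≤ D := hD.nonneg fun k => mul_nonneg (hw0 k) (by have := hsk k; positivity)
  nlinarith [mul_nonneg (sub_nonneg.2 hq1.le) cs]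

lemma negbinExp_inv_mul_le (hs : 1 ≤ s) (hq0 : 0 < q) (hq1 : q < 1) :
    s * (s - 1 + q) * (s - 1 + 2 * q) * negbinExp s q (fun n => (n : ℝ)⁻¹) ≤
      q * (s * (s - 1 + 2 * q) - q * (1 - q)) := by
  have hquad := negbinExp_inv_sq_add_le hs hq0 hq1
  have hD : 0 ≤ negbinExp s q (fun n => (n : ℝ)⁻¹) :=
    negbinExp_nonneg hq0.le hq1.le fun n => inv_nonneg.2 n.cast_nonneg
  set D := negbinExp s q (fun n => (n : ℝ)⁻¹)
  have h1 : (1 : ℝ) ≤ s := by exact_mod_cast hs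
  set B : ℝ := s * (s - 1 + q) * (s - 1 + 2 * q)
  set C : ℝ := q * (s * (s - 1 + 2 * q) - q * (1 - q))
  have hs1 : 0 < (s : ℝ) - 1 + q := by linarith
  have hq1' : 0 < 1 - q := by linarith
  have hB : 0 < B := by positivity
  have hC : 0 ≤ C := by
    have : 2 * q ≤ s * (s - 1 + 2 * q) := by nlinarith
    have : 0 ≤ s * (s - 1 + 2 * q) - q * (1 - q) := by nlinarith
    positivity
  -- `x ↦ s x² + (s - 1) x` is increasing on `x ≥ 0` and exceeds `q` at `x = C / B`
  have hgap : 0 < s * C ^ 2 + (s - 1) * C * B - q * B ^ 2 := by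
    have : s * C ^ 2 + (s - 1) * C * B - q * B ^ 2 = s * (s - 1 + q) ^ 2 * q ^ 2 * (1 - q) ^ 2 := by
      ring
    rw [this]
    positivity
  have : (B * D - C) * (s * (B * D + C) + (s - 1) * B) < 0 := by nlinarith
  linarith [neg_of_mul_neg_left this (by positivity)]

end NegativeBinomial

lemma negbinExp2_ghat {r : ℕ} (hr : 2 ≤ r) {p : ℝ} (hp0 : 0 < p) (hp1 : p < 1) :
    negbinExp2 (r + 1) p (r - 1) (1 - p) (ghat r) = p / (1 - p) := by
  have hp : |1 - p| < 1 := by rw [abs_lt]; constructor <;> linarith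
  have hq : |1 - (1 - p)| < 1 := by rw [sub_sub_cancel, abs_lt]; constructor <;> linarith
  have hr1 : ((r - 1 : ℕ) : ℝ) = r - 1 := by rw [Nat.cast_sub (by omega), Nat.cast_one]
  have hr0 : (r : ℝ) - 1 ≠ 0 := by rw [← hr1]; exact Nat.cast_ne_zero.2 (by omega)
  have hp1' : 1 - p ≠ 0 := by linarith
  rw [show ghat r = fun n₁ n₂ : ℕ => (r : ℝ) / ((n₁ : ℝ) - 1) * ((n₂ : ℝ) / ((r : ℝ) - 1)) from rfl,
    negbinExp2_mul, negbinExp_div_sub_one (by omega) hp, negbinExp_natCast_div (by omega) hq, hr1]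
  field_simp

lemma negbinExp2_ghat_sq {r : ℕ} (hr : 2 ≤ r) {p : ℝ} (hp0 : 0 < p) (hp1 : p < 1) :
    negbinExp2 (r + 1) p (r - 1) (1 - p) (fun n₁ n₂ => (ghat r n₁ n₂) ^ 2) =
      p * r * negbinExp r p (fun n => (n : ℝ)⁻¹) * ((r - 1 + p) / ((r - 1) * (1 - p) ^ 2)) := by
  have hq : |1 - (1 - p)| < 1 := by rw [sub_sub_cancel, abs_lt]; constructor <;> linarith
  have hr1 : ((r - 1 : ℕ) : ℝ) = r - 1 := by rw [Nat.cast_sub (by omega), Nat.cast_one]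
  have hr0 : (r : ℝ) - 1 ≠ 0 := by rw [← hr1]; exact Nat.cast_ne_zero.2 (by omega)
  have hp1' : 1 - p ≠ 0 := by linarith
  simp only [ghat, mul_pow]
  rw [negbinExp2_mul, negbinExp_div_sub_one_sq (by omega), negbinExp_natCast_div_sq (by omega) hq,
    hr1]
  field_simp
  ring

theorem odds_estimator_relative_variance (r : ℕ) (hr : 2 ≤ r) (p : ℝ)
    (hp0 : 0 < p) (hp1 : p < 1) :
    (negbinExp2 (r + 1) p (r - 1) (1 - p) (fun n₁ n₂ => (ghat r n₁ n₂) ^ 2) -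
        (negbinExp2 (r + 1) p (r - 1) (1 - p) (ghat r)) ^ 2) / (p / (1 - p)) ^ 2 ≤
      (1 / ((r : ℝ) - 1)) * (1 - p * (1 - p) / ((r : ℝ) - 1 + 2 * p)) := by
  rw [negbinExp2_ghat_sq hr hp0 hp1, negbinExp2_ghat hr hp0 hp1, ← sub_nonneg]
  have hD := negbinExp_inv_mul_le (s := r) (by omega) hp0 hp1
  set D := negbinExp r p (fun n => (n : ℝ)⁻¹)
  have hr1 : (1 : ℝ) < r := by exact_mod_cast hr
  have hr0 : (r : ℝ) - 1 ≠ 0 := by linarith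
  have h2p : (r : ℝ) - 1 + 2 * p ≠ 0 := by linarith
  have hp1' : 1 - p ≠ 0 := by linarith
  have hdiff : 1 / ((r : ℝ) - 1) * (1 - p * (1 - p) / ((r : ℝ) - 1 + 2 * p)) -
      (p * r * D * ((r - 1 + p) / ((r - 1) * (1 - p) ^ 2)) - (p / (1 - p)) ^ 2) / (p / (1 - p)) ^ 2 =
      (p * (r * (r - 1 + 2 * p) - p * (1 - p)) - r * (r - 1 + p) * (r - 1 + 2 * p) * D) /
        ((r - 1) * p * (r - 1 + 2 * p)) := by
    rw [one_sub_div h2p]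
    field_simp
    ring
  rw [hdiff]
  have : 0 < (r : ℝ) - 1 := by linarith
  exact div_nonneg (sub_nonneg.2 hD) (by positivity)
end

section
/- Let r ∈ ℕ with r ≥ 2 and p ∈ (0,1). Let N₁ be negative binomial with parameters r and p, and N₂ be negative binomial with parameters r and 1−p, independent. Then the log odds estimator δ̂ = −H_{N₁−1} + H_{N₂−1} is unbiased for the log odds: Σ_{n₁≥r} Σ_{n₂≥r} C(n₁−1, r−1) p^r (1−p)^{n₁−r} · C(n₂−1, r−1) (1−p)^r p^{n₂−r} · (−H_{n₁−1} + H_{n₂−1}) = log(p/(1−p)). -/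
open scoped BigOperators

/-!
Put `x = 1 - q`. The Cauchy product of `-log (1 - x) = ∑ xⁱ⁺¹ / (i + 1)` and
`(1 - x)⁻⁽ᵗ⁺¹⁾ = ∑ C(j + t, t) xʲ` has `n`-th coefficient `C(n + t, t) (H (n + t) - H t)`, by a
Pascal-type recursion in `n` and `t`. Multiplying by `q ^ (t + 1)` gives
`E[H (N - 1)] = H (s - 1) - log q` for `N` negative binomial with parameters `s = t + 1` and `q`,
so the estimator has mean `-(H (r - 1) - log p) + (H (r - 1) - log (1 - p)) = log (p / (1 - p))`.
-/

open Finset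

lemma H_succ (m : ℕ) : H (m + 1) = H m + 1 / (m + 1) := by
  simp [H, sum_range_succ]

lemma choose_mul_harmonic_sub_succ (m s : ℕ) :
    ((m + 1).choose (s + 1) : ℝ) * (H (m + 1) - H (s + 1)) =
      (m.choose s : ℝ) * (H m - H s) + (m.choose (s + 1) : ℝ) * (H m - H (s + 1)) := by
  have hmul : ((m + 1).choose (s + 1) : ℝ) * (s + 1) = (m + 1) * m.choose s := by
    exact_mod_cast (Nat.add_one_mul_choose_eq m s).symm
  rw [Nat.choose_succ_succ', Nat.cast_add] at hmul ⊢
  rw [H_succ, H_succ]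
  field_simp
  linear_combination hmul

lemma sum_antidiagonal_choose_div (s n : ℕ) :
    ∑ ij ∈ antidiagonal n, ((ij.2 + s).choose s : ℝ) / (ij.1 + 1) =
      ((n + 1 + s).choose s : ℝ) * (H (n + 1 + s) - H s) := by
  induction s generalizing n with
  | zero =>
    simpa [H] using Nat.sum_antidiagonal_eq_sum_range_succ (fun i _ ↦ (1 : ℝ) / (i + 1)) n
  | succ s ih =>
    induction n with
    | zero =>
      rw [zero_add, add_comm 1 (s + 1), H_succ, Nat.choose_succ_self_right]
      simp [field]
    | succ n ihn =>
      have hpascal (ij : ℕ × ℕ) : ((ij.2 + (s + 1)).choose (s + 1) : ℝ) / (ij.1 + 1) =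
          ((ij.2 + s).choose s : ℝ) / (ij.1 + 1) +
            ((ij.2 + s).choose (s + 1) : ℝ) / (ij.1 + 1) := by
        rw [← add_assoc, Nat.choose_succ_succ', Nat.cast_add, add_div]
      have hshift : ∑ ij ∈ antidiagonal (n + 1), ((ij.2 + s).choose (s + 1) : ℝ) / (ij.1 + 1) =
          ∑ ij ∈ antidiagonal n, ((ij.2 + (s + 1)).choose (s + 1) : ℝ) / (ij.1 + 1) := by
        rw [Nat.sum_antidiagonal_succ']
        simp [add_right_comm _ 1 s, add_assoc]
      rw [sum_congr rfl fun ij _ ↦ hpascal ij, sum_add_distrib, hshift, ih, ihn]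
      convert (choose_mul_harmonic_sub_succ (n + 1 + 1 + s) s).symm using 3 <;> ring_nf

lemma hasSum_choose_mul_harmonic_mul_geometric (t : ℕ) {x : ℝ} (hx : |x| < 1) :
    HasSum (fun n ↦ ((n + t).choose t : ℝ) * (H (n + t) - H t) * x ^ n)
      (-Real.log (1 - x) / (1 - x) ^ (t + 1)) := by
  set f : ℕ → ℝ := fun i ↦ x ^ (i + 1) / (i + 1)
  set g : ℕ → ℝ := fun j ↦ ((j + t).choose t : ℝ) * x ^ j
  have hf : HasSum f (-Real.log (1 - x)) := Real.hasSum_pow_div_log_of_abs_lt_one hx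
  have hg : HasSum g (1 / (1 - x) ^ (t + 1)) := hasSum_choose_mul_geometric_of_norm_lt_one t hx
  have hf_norm : Summable (‖f ·‖) := by
    refine (Real.hasSum_pow_div_log_of_abs_lt_one (x := |x|) (by rwa [abs_abs])).summable.congr
      fun i ↦ ?_
    rw [Real.norm_eq_abs, abs_div, abs_pow, abs_of_pos (by positivity : (0 : ℝ) < i + 1)]
  have hg_norm : Summable (‖g ·‖) := by
    simpa [g] using summable_choose_mul_geometric_of_norm_lt_one t (r := |x|) (by simpa using hx)
  have hprod := (summable_norm_sum_mul_antidiagonal_of_summable_norm hf_norm hg_norm).of_norm.hasSum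
  rw [← tsum_mul_tsum_eq_tsum_sum_antidiagonal_of_summable_norm hf_norm hg_norm, hf.tsum_eq,
    hg.tsum_eq, mul_one_div] at hprod
  have hcoeff (n : ℕ) : ∑ ij ∈ antidiagonal n, f ij.1 * g ij.2 =
      ((n + 1 + t).choose t : ℝ) * (H (n + 1 + t) - H t) * x ^ (n + 1) := by
    rw [← sum_antidiagonal_choose_div, sum_mul]
    refine sum_congr rfl fun ij hij ↦ ?_
    rw [← mem_antidiagonal.mp hij]
    simp only [f, g]
    ring
  simp only [hcoeff] at hprod
  simpa using (hasSum_nat_add_iff (f := fun n ↦ ((n + t).choose t : ℝ) * (H (n + t) - H t) * x ^ n)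
    1).mp hprod

section NegativeBinomial

variable {s : ℕ} {q : ℝ}

lemma hasSum_negbin_pmf (hs : 1 ≤ s) (hq : |1 - q| < 1) :
    HasSum (fun k ↦ ((s + k - 1).choose (s - 1) : ℝ) * q ^ s * (1 - q) ^ k) 1 := by
  obtain ⟨t, rfl⟩ := Nat.exists_eq_add_of_le' hs
  have hq0 : q ≠ 0 := by rintro rfl; simp at hq
  convert! (hasSum_choose_mul_geometric_of_norm_lt_one t (r := 1 - q) hq).mul_left (q ^ (t + 1))
    using 2 with k
  · simp only [Nat.succ_add_sub_one, add_tsub_cancel_right, add_comm k t]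
    ring
  · simp [hq0]

lemma hasSum_negbin_harmonic (hs : 1 ≤ s) (hq : |1 - q| < 1) :
    HasSum (fun k ↦ ((s + k - 1).choose (s - 1) : ℝ) * q ^ s * (1 - q) ^ k * H (s + k - 1))
      (H (s - 1) - Real.log q) := by
  obtain ⟨t, rfl⟩ := Nat.exists_eq_add_of_le' hs
  have hq0 : q ≠ 0 := by rintro rfl; simp at hq
  convert! ((hasSum_choose_mul_harmonic_mul_geometric t hq).mul_left (q ^ (t + 1))).add
    ((hasSum_negbin_pmf hs hq).mul_left (H t)) using 1
  · funext k
    simp only [Nat.succ_add_sub_one, add_tsub_cancel_right, add_comm k t]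
    ring
  · rw [sub_sub_cancel, Nat.add_sub_cancel]
    field_simp
    ring

lemma negbinExp_mul_harmonic_add (hs : 1 ≤ s) (hq : |1 - q| < 1) (a b : ℝ) :
    negbinExp s q (fun n ↦ a * H (n - 1) + b) = a * (H (s - 1) - Real.log q) + b := by
  refine HasSum.tsum_eq ?_
  convert! ((hasSum_negbin_harmonic hs hq).mul_left a).add ((hasSum_negbin_pmf hs hq).mul_left b)
    using 2 with k
  · ring
  · ring

end NegativeBinomial

lemma negbinExp2_eq_negbinExp_negbinExp (s₁ s₂ : ℕ) (q₁ q₂ : ℝ) (f : ℕ → ℕ → ℝ) :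
    negbinExp2 s₁ q₁ s₂ q₂ f = negbinExp s₁ q₁ (fun n₁ ↦ negbinExp s₂ q₂ (f n₁)) := by
  simp only [negbinExp2, negbinExp, ← tsum_mul_left, mul_assoc]

theorem log_odds_estimator_unbiased (r : ℕ) (hr : 2 ≤ r) (p : ℝ)
    (hp0 : 0 < p) (hp1 : p < 1) :
    negbinExp2 r p r (1 - p) (fun n₁ n₂ => -H (n₁ - 1) + H (n₂ - 1)) =
      Real.log (p / (1 - p)) := by
  have hr1 : 1 ≤ r := by omega
  have hp : |1 - p| < 1 := by rw [abs_lt]; constructor <;> linarith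
  have hp' : |1 - (1 - p)| < 1 := by rw [sub_sub_cancel, abs_lt]; constructor <;> linarith
  have hinner (n₁ : ℕ) : negbinExp r (1 - p) (fun n₂ ↦ -H (n₁ - 1) + H (n₂ - 1)) =
      -1 * H (n₁ - 1) + (H (r - 1) - Real.log (1 - p)) := by
    convert negbinExp_mul_harmonic_add hr1 hp' 1 (-H (n₁ - 1)) using 1
    · simp only [one_mul, add_comm]
    · ring
  rw [negbinExp2_eq_negbinExp_negbinExp, funext hinner, negbinExp_mul_harmonic_add hr1 hp,
    Real.log_div hp0.ne' (by linarith)]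
  ring
end
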